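/- Let φ(s) = arctan(√2) + 2·arctan(tanh(√3·s/2)), Λ(s) = arctan(tanh(√3·s/2)) and ψ(s) = log(cosh(√3·s)). For any constants c₁ > 0 and c₂ ∈ ℝ, the functions y(s) = c₁·exp((2√2/3)·Λ(s) − (2/3)·ψ(s)) and θ(s) = (2√2/3)·Λ(s) + (1/3)·ψ(s) + c₂ satisfy y'(s) = √2·y(s)·cos φ(s) and θ'(s) = sin φ(s) for all s ∈ ℝ. -/

import Mathlib

/-
With `x = √3 s`, both `Λ` and `φ` are expressed through the Gudermannian function
`gd x = 2 arctan (tanh (x / 2))`: `Λ = gd x / 2` and `φ = arctan √2 + gd x`.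
Since `cos (gd x) = sech x`, `sin (gd x) = tanh x` and `gd' = sech`, while `(log cosh)' = tanh`,
both equations reduce to linear identities in `sech x` and `tanh x`.
-/

open Real

lemma hasDerivAt_tanh (x : ℝ) : HasDerivAt tanh (cosh x ^ 2)⁻¹ x := by
  rw [show tanh = fun x => sinh x / cosh x from funext tanh_eq_sinh_div_cosh]
  refine ((hasDerivAt_sinh x).div (hasDerivAt_cosh x) (cosh_pos x).ne').congr_deriv ?_
  rw [← sq, ← sq, cosh_sq_sub_sinh_sq, one_div]

lemma hasDerivAt_log_cosh (x : ℝ) : HasDerivAt (fun x => log (cosh x)) (tanh x) x := by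
  simpa only [← tanh_eq_sinh_div_cosh] using (hasDerivAt_cosh x).log (cosh_pos x).ne'

lemma cos_two_mul_arctan (t : ℝ) : cos (2 * arctan t) = (1 - t ^ 2) / (1 + t ^ 2) := by
  rw [cos_two_mul, cos_sq_arctan]
  field_simp
  ring

lemma sin_two_mul_arctan (t : ℝ) : sin (2 * arctan t) = 2 * t / (1 + t ^ 2) := by
  have hsin : sin (arctan t) = t * cos (arctan t) := by
    rw [sin_arctan, cos_arctan]
    ring
  rw [sin_two_mul, hsin]
  linear_combination 2 * t * cos_sq_arctan t

lemma cos_arctan_add (a z : ℝ) : cos (arctan a + z) = (cos z - a * sin z) / √(1 + a ^ 2) := by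
  rw [cos_add, cos_arctan, sin_arctan]
  ring

lemma sin_arctan_add (a z : ℝ) : sin (arctan a + z) = (a * cos z + sin z) / √(1 + a ^ 2) := by
  rw [sin_add, cos_arctan, sin_arctan]
  ring

lemma cosh_half_sq_add_sinh_half_sq (x : ℝ) : cosh (x / 2) ^ 2 + sinh (x / 2) ^ 2 = cosh x := by
  rw [← cosh_two_mul, mul_div_cancel₀ x two_ne_zero]

lemma two_mul_sinh_half_mul_cosh_half (x : ℝ) : 2 * sinh (x / 2) * cosh (x / 2) = sinh x := by
  rw [← sinh_two_mul, mul_div_cancel₀ x two_ne_zero]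

noncomputable def gudermannian (x : ℝ) : ℝ := 2 * arctan (tanh (x / 2))

lemma cos_gudermannian (x : ℝ) : cos (gudermannian x) = (cosh x)⁻¹ := by
  have hc := (cosh_pos (x / 2)).ne'
  rw [gudermannian, cos_two_mul_arctan, tanh_eq_sinh_div_cosh,
    ← cosh_half_sq_add_sinh_half_sq x]
  field_simp
  exact cosh_sq_sub_sinh_sq (x / 2)

lemma sin_gudermannian (x : ℝ) : sin (gudermannian x) = tanh x := by
  have hc := (cosh_pos (x / 2)).ne'
  rw [gudermannian, sin_two_mul_arctan, tanh_eq_sinh_div_cosh, tanh_eq_sinh_div_cosh,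
    ← cosh_half_sq_add_sinh_half_sq x, ← two_mul_sinh_half_mul_cosh_half x]
  field_simp

lemma hasDerivAt_gudermannian (x : ℝ) : HasDerivAt gudermannian (cosh x)⁻¹ x := by
  have hc := (cosh_pos (x / 2)).ne'
  refine (((hasDerivAt_tanh (x / 2)).comp x ((hasDerivAt_id x).div_const 2)).arctan.const_mul 2
    ).congr_deriv ?_
  rw [Function.comp_apply, id_eq, tanh_eq_sinh_div_cosh, ← cosh_half_sq_add_sinh_half_sq x]
  field_simp

lemma hasDerivAt_gudermannian_const_mul (k s : ℝ) :
    HasDerivAt (fun s => gudermannian (k * s)) (k * (cosh (k * s))⁻¹) s := by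
  refine ((hasDerivAt_gudermannian _).comp s ((hasDerivAt_id s).const_mul k)).congr_deriv ?_
  simp only [id_eq, mul_one, mul_comm]

lemma hasDerivAt_log_cosh_const_mul (k s : ℝ) :
    HasDerivAt (fun s => log (cosh (k * s))) (k * tanh (k * s)) s := by
  refine ((hasDerivAt_log_cosh _).comp s ((hasDerivAt_id s).const_mul k)).congr_deriv ?_
  simp only [id_eq, mul_one, mul_comm]

lemma cos_arctan_sqrt_two_add_gudermannian (x : ℝ) :
    cos (arctan √2 + gudermannian x) = √3 / 3 * ((cosh x)⁻¹ - √2 * tanh x) := by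
  rw [cos_arctan_add, cos_gudermannian, sin_gudermannian, div_eq_mul_one_div,
    show √(1 + √2 ^ 2) = √3 by norm_num, ← sqrt_div_self', mul_comm]

lemma sin_arctan_sqrt_two_add_gudermannian (x : ℝ) :
    sin (arctan √2 + gudermannian x) = √3 / 3 * (√2 * (cosh x)⁻¹ + tanh x) := by
  rw [sin_arctan_add, cos_gudermannian, sin_gudermannian, div_eq_mul_one_div,
    show √(1 + √2 ^ 2) = √3 by norm_num, ← sqrt_div_self', mul_comm]

theorem stmt_5_general (φ Λ ψ y θ : ℝ → ℝ) (c₁ c₂ : ℝ)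
    (hφ : φ = fun s =>
      Real.arctan (Real.sqrt 2) + 2 * Real.arctan (Real.tanh (Real.sqrt 3 * s / 2)))
    (hΛ : Λ = fun s => Real.arctan (Real.tanh (Real.sqrt 3 * s / 2)))
    (hψ : ψ = fun s => Real.log (Real.cosh (Real.sqrt 3 * s)))
    (hy : y = fun s => c₁ * Real.exp (2 * Real.sqrt 2 / 3 * Λ s - 2 / 3 * ψ s))
    (hθ : θ = fun s => 2 * Real.sqrt 2 / 3 * Λ s + 1 / 3 * ψ s + c₂) :
    ∀ s : ℝ, HasDerivAt y (Real.sqrt 2 * y s * Real.cos (φ s)) s ∧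
      HasDerivAt θ (Real.sin (φ s)) s := by
  intro s
  have hΛ' : HasDerivAt Λ (√3 / 2 * (cosh (√3 * s))⁻¹) s := by
    have hΛ_gd : Λ = fun s => gudermannian (√3 * s) / 2 := by
      funext s
      rw [hΛ, gudermannian]
      ring
    rw [hΛ_gd]
    exact ((hasDerivAt_gudermannian_const_mul _ s).div_const 2).congr_deriv (by ring)
  have hψ' : HasDerivAt ψ (√3 * tanh (√3 * s)) s := hψ ▸ hasDerivAt_log_cosh_const_mul _ s
  have hφs : φ s = arctan √2 + gudermannian (√3 * s) := by rw [hφ, gudermannian]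
  constructor
  · rw [hy]
    refine (((hΛ'.const_mul _).sub (hψ'.const_mul _)).exp.const_mul c₁).congr_deriv ?_
    simp only [hφs, cos_arctan_sqrt_two_add_gudermannian, Pi.sub_apply]
    linear_combination √3 / 3 * tanh (√3 * s) * c₁ * rexp (2 * √2 / 3 * Λ s - 2 / 3 * ψ s) *
      sq_sqrt (show (0 : ℝ) ≤ 2 by norm_num)
  · rw [hθ, hφs, sin_arctan_sqrt_two_add_gudermannian]
    exact (((hΛ'.const_mul _).add (hψ'.const_mul _)).add_const c₂).congr_deriv (by ring)

/-- with `φ(s) = arctan √2 + 2 arctan(tanh(√3 s/2))`,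
`Λ(s) = arctan(tanh(√3 s/2))` and `ψ(s) = log(cosh(√3 s))`, the functions
`y(s) = c₁ exp((2√2/3) Λ(s) − (2/3) ψ(s))` and
`θ(s) = (2√2/3) Λ(s) + (1/3) ψ(s) + c₂` satisfy `y' = √2 y cos φ` and
`θ' = sin φ`. -/
theorem stmt_5 (φ Λ ψ y θ : ℝ → ℝ) (c₁ c₂ : ℝ) (hc₁ : 0 < c₁)
    (hφ : φ = fun s =>
      Real.arctan (Real.sqrt 2) + 2 * Real.arctan (Real.tanh (Real.sqrt 3 * s / 2)))
    (hΛ : Λ = fun s => Real.arctan (Real.tanh (Real.sqrt 3 * s / 2)))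
    (hψ : ψ = fun s => Real.log (Real.cosh (Real.sqrt 3 * s)))
    (hy : y = fun s => c₁ * Real.exp (2 * Real.sqrt 2 / 3 * Λ s - 2 / 3 * ψ s))
    (hθ : θ = fun s => 2 * Real.sqrt 2 / 3 * Λ s + 1 / 3 * ψ s + c₂) :
    ∀ s : ℝ, HasDerivAt y (Real.sqrt 2 * y s * Real.cos (φ s)) s ∧
      HasDerivAt θ (Real.sin (φ s)) s :=
  stmt_5_general φ Λ ψ y θ c₁ c₂ hφ hΛ hψ hy hθ
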